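/- Let I ⊆ ℝ be an open interval containing 0 and let (H, φ) solve the EdGB FLRW system on I. If H(t) > 0 for all t ∈ I and φ'(0) < 0, then for all t ∈ I the scalar field velocity satisfies the two-sided bound −6·H(t)^3·exp(φ(t)) − √6·H(t) < φ'(t) < −6·H(t)^3·exp(φ(t)). -/
import Mathlib


/-- The EdGB FLRW system on a set `I ⊆ ℝ`: `H` is continuously differentiable and
`φ` twice continuously differentiable on `I`, and for every `t ∈ I` the Hamiltonian
constraint `3H² − 3e^φ φ' H³ = φ'²/2` and the scalar field equation
`φ'' = −3Hφ' − 3e^φ H²(H² + H')` hold. -/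
def EdGB (H φ : ℝ → ℝ) (I : Set ℝ) : Prop :=
  ContDiffOn ℝ 1 H I ∧ ContDiffOn ℝ 2 φ I ∧
  (∀ t ∈ I, 3 * H t ^ 2 - 3 * Real.exp (φ t) * deriv φ t * H t ^ 3 = (deriv φ t) ^ 2 / 2) ∧
  (∀ t ∈ I, deriv (deriv φ) t =
      -3 * H t * deriv φ t - 3 * Real.exp (φ t) * H t ^ 2 * (H t ^ 2 + deriv H t))

/-- On an open interval `I` containing `0`, if `(H, φ)` solves the EdGB FLRW
system on `I`, `H > 0` on `I` and `φ'(0) < 0`, then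
`−6H³e^φ − √6·H < φ' < −6H³e^φ` on `I`. -/
theorem stmt_2 (a b : EReal) (ha : a < 0) (hb : 0 < b) (H φ : ℝ → ℝ)
    (hsys : EdGB H φ {t : ℝ | a < (t : EReal) ∧ (t : EReal) < b})
    (hH : ∀ t : ℝ, a < (t : EReal) → (t : EReal) < b → 0 < H t)
    (hφ0 : deriv φ 0 < 0) :
    ∀ t : ℝ, a < (t : EReal) → (t : EReal) < b →
      -6 * H t ^ 3 * Real.exp (φ t) - Real.sqrt 6 * H t < deriv φ t
        ∧ deriv φ t < -6 * H t ^ 3 * Real.exp (φ t) := by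
  obtain ⟨hHd, hφd, hcon, heq⟩ := hsys
  set I : Set ℝ := {t : ℝ | a < (t : EReal) ∧ (t : EReal) < b} with hIdef
  have hopen : IsOpen I := by
    have hIeq : I = (fun t : ℝ => (t : EReal)) ⁻¹' (Set.Ioo a b) := by
      ext t; simp [hIdef, Set.mem_Ioo]
    rw [hIeq]
    exact isOpen_Ioo.preimage continuous_coe_real_ereal
  have hconn : IsPreconnected I := by
    apply Set.OrdConnected.isPreconnected
    constructor
    intro x hx y hy z hz
    exact ⟨lt_of_lt_of_le hx.1 (EReal.coe_le_coe_iff.2 hz.1),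
      lt_of_le_of_lt (EReal.coe_le_coe_iff.2 hz.2) hy.2⟩
  have h0I : (0 : ℝ) ∈ I := ⟨by simpa using ha, by simpa using hb⟩
  have hc : ContinuousOn (deriv φ) I :=
    hφd.continuousOn_deriv_of_isOpen hopen (by norm_num)
  have hne : ∀ t ∈ I, deriv φ t ≠ 0 := by
    intro t ht h0
    have hct := hcon t ht
    have hHt := hH t ht.1 ht.2
    rw [h0] at hct
    nlinarith
  have hneg : ∀ t ∈ I, deriv φ t < 0 := by
    intro t ht
    by_contra hle
    push_neg at hle
    have hmem : (0 : ℝ) ∈ Set.Icc (deriv φ 0) (deriv φ t) := ⟨le_of_lt hφ0, hle⟩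
    obtain ⟨s, hs, hs0⟩ := hconn.intermediate_value h0I ht hc hmem
    exact hne s hs hs0
  intro t hta htb
  have ht : t ∈ I := ⟨hta, htb⟩
  have hHt := hH t hta htb
  have hx := hneg t ht
  have hct := hcon t ht
  set h := H t with hh
  set e := Real.exp (φ t) with hee
  set x := deriv φ t with hxx
  have he : 0 < e := Real.exp_pos _
  have hs6 : Real.sqrt 6 ^ 2 = 6 := Real.sq_sqrt (by norm_num)
  have hs6' : (0 : ℝ) < Real.sqrt 6 := Real.sqrt_pos.2 (by norm_num)
  constructor
  · by_contra hle
    push_neg at hle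
    -- hle : x ≤ -6 * h ^ 3 * e - √6 * h
    have h1 : Real.sqrt 6 * h ≤ -(x + 6 * e * h ^ 3) := by linarith
    have h2 : Real.sqrt 6 * h * (Real.sqrt 6 * h) ≤
        (-(x + 6 * e * h ^ 3)) * (-(x + 6 * e * h ^ 3)) :=
      mul_le_mul h1 h1 (mul_nonneg hs6'.le hHt.le) (by linarith [mul_nonneg hs6'.le hHt.le])
    have h3 : 0 < e * h ^ 3 * (-(x + 6 * e * h ^ 3)) := by
      apply mul_pos (by positivity)
      have := mul_pos hs6' hHt
      linarith
    nlinarith [h2, h3, hct, hs6]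
  · by_contra hle
    push_neg at hle
    -- hle : -6 * h ^ 3 * e ≤ x
    have h1 : (0 : ℝ) ≤ x + 6 * e * h ^ 3 := by linarith
    have h2 : 0 ≤ (-x) * (x + 6 * e * h ^ 3) := mul_nonneg (by linarith) h1
    nlinarith [h2, hct, mul_pos hHt hHt]
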